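/- Every closed trapezoidal word over {a,b} is Sturmian. -/

import Mathlib

/-- The two-letter alphabet {a, b}. -/
inductive AB : Type
  | a : AB
  | b : AB
deriving DecidableEq, Repr

/-- A (finite) word over {a, b}. -/
abbrev Word := List AB

open AB

/-- `u` occurs in `w` at position `i`. -/
def OccursAt (u w : Word) (i : ℕ) : Prop :=
  i + u.length ≤ w.length ∧ (w.drop i).take u.length = u

/-- `u` occurs exactly once in `w` (is unrepeated in `w`). -/
def OccursOnce (u w : Word) : Prop := ∃! i, OccursAt u w i

/-- `u` is a right special factor of `w`: both `ua` and `ub` are factors of `w`. -/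
def IsRightSpecial (u w : Word) : Prop := (u ++ [a]) <:+: w ∧ (u ++ [b]) <:+: w

/-- `u` is a left special factor of `w`: both `au` and `bu` are factors of `w`. -/
def IsLeftSpecial (u w : Word) : Prop := ([a] ++ u) <:+: w ∧ ([b] ++ u) <:+: w

/-- `K w`: the length of the shortest unrepeated suffix of `w`. -/
noncomputable def Kp (w : Word) : ℕ := sInf {n | ∃ s : Word, s <:+ w ∧ s.length = n ∧ OccursOnce s w}

/-- `H w`: the length of the shortest unrepeated prefix of `w`. -/
noncomputable def Hp (w : Word) : ℕ := sInf {n | ∃ p : Word, p <+: w ∧ p.length = n ∧ OccursOnce p w}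

/-- `R w`: the smallest `n ≥ 0` such that `w` has no right special factor of length `n`. -/
noncomputable def Rp (w : Word) : ℕ := sInf {n | ∀ u : Word, u.length = n → ¬ IsRightSpecial u w}

/-- `L w`: the smallest `n ≥ 0` such that `w` has no left special factor of length `n`. -/
noncomputable def Lp (w : Word) : ℕ := sInf {n | ∀ u : Word, u.length = n → ¬ IsLeftSpecial u w}

/-- A word `w` is trapezoidal if `|w| = K w + R w`. -/
def IsTrapezoidal (w : Word) : Prop := w.length = Kp w + Rp w

/-- A finite word over `{a,b}` is Sturmian iff it is balanced: there is no word `u`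
with both `aua` and `bub` factors of `w`. -/
def IsSturmian (w : Word) : Prop :=
  ¬ ∃ u : Word, ([a] ++ u ++ [a]) <:+: w ∧ ([b] ++ u ++ [b]) <:+: w

/-- A nonempty word is closed if it has a border (a proper prefix which is also a suffix)
whose only occurrences in `w` are as a prefix and as a suffix. -/
def IsClosedWord (w : Word) : Prop :=
  w ≠ [] ∧ ∃ v : Word, v <+: w ∧ v.length < w.length ∧ v <:+ w ∧
    ∀ i : ℕ, OccursAt v w i → i = 0 ∨ i + v.length = w.length

/-- A nonempty word is open if it is not closed. -/
def IsOpenWord (w : Word) : Prop := w ≠ [] ∧ ¬ IsClosedWord w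

/-- Central words: `a^n`, `b^n`, or `u a b v = v b a u`. -/
def IsCentral (w : Word) : Prop :=
  (∃ n : ℕ, w = List.replicate n a) ∨ (∃ n : ℕ, w = List.replicate n b) ∨
  (∃ u v : Word, w = u ++ [a, b] ++ v ∧ w = v ++ [b, a] ++ u)

/-- The minimal period of `w`: `|w|` minus the length of the longest border of `w`. -/
noncomputable def minPeriod (w : Word) : ℕ :=
  w.length - sSup {n | ∃ v : Word, v.length = n ∧ v <+: w ∧ v ≠ w ∧ v <:+ w}

/-!
Let `v` be a border of `w` without internal occurrences. Then `K w = |v| + 1`, and `P = |w| - |v|`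
is a period of `w`, so trapezoidality gives `R w = P - 1`. If `P = 1` the word `w` is a power of a
letter; otherwise `w` has a right special factor `z` of length `P - 2`. Read `w` as a circular word `c` of length `P`. The occurrences of `za` and
`zb` show that translation by their offset `δ` fixes `c` except at two consecutive positions
`x, x + 1`. A translation preserves the number of `a`'s, so these two defects must cancel along
every orbit; hence `δ` generates `ZMod P`, and moving a window of length `L` by `δ` changes its
number of `a`'s only when the window starts at `x + 1 - L` or at `x + 1`, with opposite signs.
Walking along the single `δ`-orbit from one window to another meets each of these positions at
most once, so `c` is balanced, which excludes the factors `aua` and `bub`.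
-/

theorem occursAt_iff_exists_append {u w : Word} {i : ℕ} :
    OccursAt u w i ↔ ∃ p q, p.length = i ∧ w = p ++ u ++ q := by
  constructor
  · rintro ⟨hle, h⟩
    refine ⟨w.take i, (w.drop i).drop u.length, by simp; omega, ?_⟩
    conv_lhs => rw [← List.take_append_drop i w, ← List.take_append_drop u.length (w.drop i), h]
    simp
  · rintro ⟨p, q, rfl, rfl⟩
    exact ⟨by simp, by simp [List.drop_left', List.take_left']⟩

theorem infix_iff_exists_occursAt {u w : Word} : u <:+: w ↔ ∃ i, OccursAt u w i := by
  simp only [occursAt_iff_exists_append]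
  exact ⟨fun ⟨s, t, h⟩ => ⟨_, s, t, rfl, h.symm⟩, fun ⟨_, s, t, _, h⟩ => ⟨s, t, h.symm⟩⟩

theorem occursAt_zero_of_prefix {u w : Word} (h : u <+: w) : OccursAt u w 0 := by
  obtain ⟨t, rfl⟩ := h
  exact occursAt_iff_exists_append.2 ⟨[], t, rfl, by simp⟩

theorem occursAt_of_suffix {u w : Word} (h : u <:+ w) : OccursAt u w (w.length - u.length) := by
  obtain ⟨s, rfl⟩ := h
  exact occursAt_iff_exists_append.2 ⟨s, [], by simp, by simp⟩

theorem OccursAt.drop {u w : Word} {i : ℕ} (h : OccursAt u w i) {j : ℕ} (hj : j ≤ u.length) :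
    OccursAt (u.drop j) w (i + j) := by
  obtain ⟨p, q, rfl, rfl⟩ := occursAt_iff_exists_append.1 h
  refine occursAt_iff_exists_append.2 ⟨p ++ u.take j, q, by simp; omega, ?_⟩
  conv_lhs => rw [← List.take_append_drop j u]
  simp

theorem Kp_eq_of_border {v w : Word} (hpre : v <+: w) (hsuf : v <:+ w)
    (hlt : v.length < w.length)
    (hborder : ∀ i, OccursAt v w i → i = 0 ∨ i + v.length = w.length) :
    Kp w = v.length + 1 := by
  obtain ⟨p, rfl⟩ := hsuf
  obtain ⟨p, e, rfl⟩ : ∃ p' e, p = p' ++ [e] := by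
    rcases List.eq_nil_or_concat p with rfl | ⟨p', e, rfl⟩
    · simp at hlt
    · exact ⟨p', e, by simp⟩
  have hunrep : e :: v <:+ p ++ [e] ++ v ∧ OccursOnce (e :: v) (p ++ [e] ++ v) := by
    refine ⟨⟨p, by simp⟩, p.length, occursAt_iff_exists_append.2 ⟨p, [], rfl, by simp⟩, ?_⟩
    intro i hi
    have := hborder _ (hi.drop (j := 1) (by simp))
    simp at this
    omega
  unfold Kp
  have hmem : v.length + 1 ∈ {n | ∃ s : Word, s <:+ p ++ [e] ++ v ∧ s.length = n ∧
      OccursOnce s (p ++ [e] ++ v)} := ⟨_, hunrep.1, rfl, hunrep.2⟩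
  refine le_antisymm (Nat.sInf_le hmem) (le_csInf ⟨_, hmem⟩ ?_)
  rintro _ ⟨s, hs, rfl, i, -, huniq⟩
  by_contra! hsv
  have hsv' : s <:+ v := List.suffix_of_suffix_length_le hs (List.suffix_append _ _) (by omega)
  have h1 := huniq _ (occursAt_of_suffix hs)
  have h2 := huniq (v.length - s.length) (by
    have := (occursAt_zero_of_prefix hpre).drop (j := v.length - s.length) (by omega)
    rwa [zero_add, ← List.suffix_iff_eq_drop.1 hsv'] at this)
  simp only [List.length_append, List.length_singleton] at h1
  omega

theorem exists_rightSpecial_of_lt_Rp {w : Word} {n : ℕ} (h : n < Rp w) :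
    ∃ u : Word, u.length = n ∧ IsRightSpecial u w := by
  simpa using Nat.notMem_of_lt_sInf h

def HasPeriod (w : Word) (P : ℕ) : Prop := ∀ t, t + P < w.length → w[t + P]? = w[t]?

theorem hasPeriod_of_border {v w : Word} (hpre : v <+: w) (hsuf : v <:+ w) :
    HasPeriod w (w.length - v.length) := by
  obtain ⟨s, rfl⟩ := hpre
  obtain ⟨p, hp⟩ := hsuf
  have hlen : p.length = s.length := by
    have := congrArg List.length hp
    simp only [List.length_append] at this
    omega
  intro t ht
  simp only [List.length_append, Nat.add_sub_cancel_left] at ht ⊢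
  rw [← hlen, ← hp, List.getElem?_append_right (by omega), hp,
    List.getElem?_append_left (by omega), Nat.add_sub_cancel]

theorem HasPeriod.getElem?_mod {w : Word} {P : ℕ} (h : HasPeriod w P) (hP : 0 < P) :
    ∀ t < w.length, w[t % P]? = w[t]? := by
  intro t
  induction t using Nat.strong_induction_on with
  | _ t ih =>
    intro ht
    rcases Nat.lt_or_ge t P with htP | htP
    · rw [Nat.mod_eq_of_lt htP]
    · rw [Nat.mod_eq_sub_mod htP, ih _ (by omega) (by omega), ← h _ (by omega),
        Nat.sub_add_cancel htP]

def indicatorA : AB → ℤ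
  | a => 1
  | b => 0

section CircularWord

variable {P : ℕ}

def CircOccursAt (u : Word) (c : ZMod P → AB) (k : ZMod P) : Prop :=
  ∀ t (ht : t < u.length), c (k + t) = u[t]

def windowCount (c : ZMod P → AB) (k : ZMod P) (L : ℕ) : ℤ :=
  ∑ j ∈ Finset.range L, indicatorA (c (k + j))

def IsCircBalanced (c : ZMod P → AB) : Prop :=
  ∀ k₀ k₁ L, |windowCount c k₁ L - windowCount c k₀ L| ≤ 1

theorem windowCount_eq_count {c : ZMod P → AB} {u : Word} {k : ZMod P}
    (h : CircOccursAt u c k) : windowCount c k u.length = u.count a := by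
  induction u generalizing k with
  | nil => simp [windowCount]
  | cons e u ih =>
    have htail : CircOccursAt u c (k + 1) := fun t ht => by
      have := h (t + 1) (by simpa using ht)
      rw [List.getElem_cons_succ] at this
      rw [← this]; push_cast; ring_nf
    have hhead : c k = e := by
      have := h 0 (by simp)
      rwa [List.getElem_cons_zero, Nat.cast_zero, add_zero] at this
    have := ih htail
    simp only [windowCount] at this ⊢
    rw [List.length_cons, Finset.sum_range_succ', List.count_cons]
    simp only [Nat.cast_add, Nat.cast_zero, add_zero, hhead, Nat.cast_one]
    simp_rw [add_comm _ (1 : ZMod P), ← add_assoc]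
    rw [this]
    cases e <;> simp [indicatorA]

variable (c : ZMod P → AB)

def shiftDefect (δ k : ZMod P) : ℤ := indicatorA (c (k + δ)) - indicatorA (c k)

def IsPeriodExceptAt (δ x : ZMod P) : Prop :=
  (∀ k, k ≠ x → k ≠ x + 1 → c (k + δ) = c k) ∧ c (x + δ) ≠ c x

theorem abs_shiftDefect_le_one (δ k : ZMod P) : |shiftDefect c δ k| ≤ 1 := by
  unfold shiftDefect
  cases c (k + δ) <;> cases c k <;> simp [indicatorA]

theorem sum_ite_orbit_le_one {δ s : ZMod P} (hs : s * δ = 1) (y z : ZMod P) {n : ℕ}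
    (hn : n ≤ P) :
    ∑ r ∈ Finset.range n, (if y + r * δ = z then (1 : ℤ) else 0) ≤ 1 := by
  rw [Finset.sum_boole, Nat.cast_le_one, Finset.card_le_one]
  simp only [Finset.mem_filter, Finset.mem_range]
  rintro r₁ ⟨hr₁, h₁⟩ r₂ ⟨hr₂, h₂⟩
  have hcast : (r₁ : ZMod P) = r₂ := by
    have := congrArg (· * s) (add_left_cancel (h₁.trans h₂.symm))
    simpa [mul_assoc, mul_comm δ s, hs] using this
  rwa [ZMod.natCast_eq_natCast_iff', Nat.mod_eq_of_lt (by omega),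
    Nat.mod_eq_of_lt (by omega)] at hcast

variable [NeZero P]

theorem sum_shiftDefect (δ : ZMod P) : ∑ k, shiftDefect c δ k = 0 := by
  simp only [shiftDefect, Finset.sum_sub_distrib]
  exact sub_eq_zero.2 (Equiv.sum_comp (Equiv.addRight δ) fun k => indicatorA (c k))

theorem sum_shiftDefect_orbit (δ y : ZMod P) :
    ∑ s : ZMod P, shiftDefect c δ (y + s * δ) = 0 := by
  simp only [shiftDefect, Finset.sum_sub_distrib, add_assoc, ← add_one_mul]
  exact sub_eq_zero.2
    (Equiv.sum_comp (Equiv.addRight (1 : ZMod P)) fun s => indicatorA (c (y + s * δ)))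

variable {c}

theorem IsPeriodExceptAt.shiftDefect_eq {δ x : ZMod P} (h : IsPeriodExceptAt c δ x)
    (k : ZMod P) :
    shiftDefect c δ k =
      shiftDefect c δ x * ((if k = x then 1 else 0) - if k = x + 1 then 1 else 0) := by
  obtain ⟨hdef, hx⟩ := h
  have hxx : x ≠ x + 1 := by
    intro hxx
    have hδ : δ = 0 := by simpa using congrArg (δ * ·) (left_eq_add.1 hxx)
    simp [hδ] at hx
  have hpair : shiftDefect c δ x + shiftDefect c δ (x + 1) = 0 := by
    rw [← Fintype.sum_eq_add x (x + 1) hxx fun k hk => by simp [shiftDefect, hdef k hk.1 hk.2]]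
    exact sum_shiftDefect c δ
  by_cases hkx : k = x
  · simp [hkx, hxx]
  by_cases hkx1 : k = x + 1
  · simp [hkx1, Ne.symm hxx]
    linarith
  · simp [hkx, hkx1, shiftDefect, hdef k hkx hkx1]

theorem IsPeriodExceptAt.exists_mul_eq_one {δ x : ZMod P} (h : IsPeriodExceptAt c δ x) :
    ∃ s, s * δ = 1 := by
  by_contra! hunit
  -- the defects along the `δ`-orbit of `x` must cancel, so the orbit reaches `x + 1`
  have hε : shiftDefect c δ x ≠ 0 := by
    have hx := h.2
    unfold shiftDefect
    cases hc : c (x + δ) <;> cases hc' : c x <;> simp_all [indicatorA]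
  have horbit := sum_shiftDefect_orbit c δ x
  rw [Finset.sum_congr rfl fun s _ => h.shiftDefect_eq (x + s * δ)] at horbit
  simp only [add_eq_left, add_right_inj, hunit, if_false, sub_zero,
    ← Finset.mul_sum, Finset.sum_boole, mul_eq_zero, hε, false_or, Nat.cast_eq_zero,
    Finset.card_eq_zero] at horbit
  exact Finset.eq_empty_iff_forall_notMem.1 horbit 0 (by simp)

theorem IsPeriodExceptAt.windowCount_add {δ x : ZMod P} (h : IsPeriodExceptAt c δ x)
    (k : ZMod P) (L : ℕ) :
    windowCount c (k + δ) L = windowCount c k L +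
      shiftDefect c δ x * ((if k = x + 1 - L then 1 else 0) - if k = x + 1 then 1 else 0) := by
  have hdiff : windowCount c (k + δ) L - windowCount c k L =
      ∑ j ∈ Finset.range L, shiftDefect c δ (k + j) := by
    simp only [windowCount, shiftDefect, Finset.sum_sub_distrib, add_right_comm]
  have hstep : ∀ j : ℕ, (k + j = x) ↔ (k + (j + 1 : ℕ) = x + 1) := by
    intro j; push_cast; rw [← add_assoc, add_left_inj]
  rw [← sub_eq_iff_eq_add', hdiff, Finset.sum_congr rfl fun (j : ℕ) _ => h.shiftDefect_eq (k + j)]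
  simp only [hstep, ← Finset.mul_sum]
  rw [Finset.sum_range_sub (fun j : ℕ => if k + (j : ZMod P) = x + 1 then (1 : ℤ) else 0)]
  simp [eq_sub_iff_add_eq]

theorem IsPeriodExceptAt.isCircBalanced {δ x : ZMod P} (h : IsPeriodExceptAt c δ x) :
    IsCircBalanced c := by
  intro k₀ k₁ L
  obtain ⟨s, hs⟩ := h.exists_mul_eq_one
  set n := ((k₁ - k₀) * s).val
  have hk₁ : k₁ = k₀ + n * δ := by simp [n, mul_assoc, hs]
  have htel : windowCount c (k₀ + n * δ) L - windowCount c (k₀ + (0 : ℕ) * δ) L =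
      shiftDefect c δ x * (∑ r ∈ Finset.range n, (if k₀ + r * δ = x + 1 - L then 1 else 0) -
        ∑ r ∈ Finset.range n, (if k₀ + r * δ = x + 1 then 1 else 0)) := by
    rw [← Finset.sum_range_sub (fun r : ℕ => windowCount c (k₀ + r * δ) L), mul_sub,
      Finset.mul_sum, Finset.mul_sum, ← Finset.sum_sub_distrib]
    refine Finset.sum_congr rfl fun r _ => ?_
    rw [Nat.cast_succ, add_one_mul, ← add_assoc, h.windowCount_add, mul_sub]
    ring
  rw [Nat.cast_zero, zero_mul, add_zero, ← hk₁] at htel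
  have hn : n ≤ P := (ZMod.val_lt _).le
  have h₁ := sum_ite_orbit_le_one hs k₀ (x + 1 - L) hn
  have h₂ := sum_ite_orbit_le_one hs k₀ (x + 1) hn
  have h₁' : 0 ≤ ∑ r ∈ Finset.range n, (if k₀ + r * δ = x + 1 - L then (1 : ℤ) else 0) :=
    Finset.sum_nonneg fun _ _ => by positivity
  have h₂' : 0 ≤ ∑ r ∈ Finset.range n, (if k₀ + r * δ = x + 1 then (1 : ℤ) else 0) :=
    Finset.sum_nonneg fun _ _ => by positivity
  rw [htel, abs_mul]
  exact mul_le_one₀ (abs_shiftDefect_le_one c δ x) (abs_nonneg _)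
    (abs_le.2 ⟨by linarith, by linarith⟩)

theorem isPeriodExceptAt_of_circOccursAt {z : Word} (hz : z.length + 2 = P) {r₁ r₂ : ZMod P}
    (ha : CircOccursAt (z ++ [a]) c r₁) (hb : CircOccursAt (z ++ [b]) c r₂) :
    IsPeriodExceptAt c (r₂ - r₁) (r₁ + z.length) := by
  constructor
  · intro k hk hk1
    obtain ⟨t, ht, rfl⟩ : ∃ t < P, k = r₁ + t :=
      ⟨(k - r₁).val, ZMod.val_lt _, by simp⟩
    have htz : t < z.length := by
      by_contra!
      obtain rfl | rfl : t = z.length ∨ t = z.length + 1 := by omega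
      exacts [hk rfl, hk1 (by push_cast; ring)]
    have hz₁ := ha t (by simp; omega)
    have hz₂ := hb t (by simp; omega)
    rw [List.getElem_append_left htz] at hz₁ hz₂
    rw [hz₁, ← hz₂]
    ring_nf
  · have hz₁ := ha z.length (by simp)
    have hz₂ := hb z.length (by simp)
    simp only [List.getElem_append_right le_rfl, Nat.sub_self, List.getElem_singleton] at hz₁ hz₂
    rw [hz₁, show r₁ + z.length + (r₂ - r₁) = r₂ + z.length by ring, hz₂]
    simp

end CircularWord

def toCirc (w : Word) (P : ℕ) : ZMod P → AB := fun k => w.getD k.val a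

theorem circOccursAt_toCirc {w u : Word} {P i : ℕ} [NeZero P] (hper : HasPeriod w P)
    (h : OccursAt u w i) : CircOccursAt u (toCirc w P) i := by
  obtain ⟨p, q, rfl, rfl⟩ := occursAt_iff_exists_append.1 h
  intro t ht
  have hlt : p.length + t < (p ++ u ++ q).length := by simp; omega
  rw [toCirc, ← Nat.cast_add, ZMod.val_natCast, List.getD_eq_getElem?_getD,
    hper.getElem?_mod (NeZero.pos P) _ hlt, List.getElem?_eq_getElem hlt]
  simp [List.getElem_append_left, List.getElem_append_right, ht]

theorem isSturmian_of_isCircBalanced {w : Word} {P : ℕ} [NeZero P] (hper : HasPeriod w P)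
    (hbal : IsCircBalanced (toCirc w P)) : IsSturmian w := by
  rintro ⟨u, hau, hbu⟩
  obtain ⟨i, hi⟩ := infix_iff_exists_occursAt.1 hau
  obtain ⟨j, hj⟩ := infix_iff_exists_occursAt.1 hbu
  have hcount_a := windowCount_eq_count (circOccursAt_toCirc hper hi)
  have hcount_b := windowCount_eq_count (circOccursAt_toCirc hper hj)
  have := hbal i j (u.length + 2)
  simp only [List.length_append, List.length_singleton, List.count_append,
    List.count_singleton_self, List.count_singleton, show (b == a) = false from rfl]
    at hcount_a hcount_b
  rw [show 1 + u.length + 1 = u.length + 2 by ring] at hcount_a hcount_b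
  rw [hcount_a, hcount_b, abs_le] at this
  push_cast at this
  omega

/-- every closed trapezoidal word is Sturmian. -/
theorem closed_trapezoidal_is_sturmian (w : Word)
    (hclosed : IsClosedWord w) (htrap : IsTrapezoidal w) :
    IsSturmian w := by
  obtain ⟨-, v, hpre, hlt, hsuf, hborder⟩ := hclosed
  have hK := Kp_eq_of_border hpre hsuf hlt hborder
  have hper := hasPeriod_of_border hpre hsuf
  set P := w.length - v.length
  have : NeZero P := ⟨by omega⟩
  apply isSturmian_of_isCircBalanced hper
  rcases (show P = 1 ∨ 2 ≤ P by omega) with hP | hP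
  · have := ZMod.subsingleton_iff.2 hP
    intro k₀ k₁ L
    simp [Subsingleton.elim k₁ k₀]
  · obtain ⟨z, hz, hza, hzb⟩ := exists_rightSpecial_of_lt_Rp (w := w) (n := P - 2) (by
      unfold IsTrapezoidal at htrap; omega)
    obtain ⟨i, hi⟩ := infix_iff_exists_occursAt.1 hza
    obtain ⟨j, hj⟩ := infix_iff_exists_occursAt.1 hzb
    exact (isPeriodExceptAt_of_circOccursAt (by omega) (circOccursAt_toCirc hper hi)
      (circOccursAt_toCirc hper hj)).isCircBalanced
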